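/- arXiv:2505.15311 — 2 statements merged into one kernel-verified Lean document; each statement's English description precedes it below -/
import Mathlib

section
/- Change-of-Trajectory-Measure Lemma: For every policy π, every policy μ whose step-wise occupancy measures have full support (d_h^μ(s,a) > 0 for all 1 ≤ h ≤ H, s ∈ S_h, a ∈ A), and every family of functions f_h : S_h × A → ℝ (1 ≤ h ≤ H), one has (E_π[Σ_{h=1}^H f_h(s_h,a_h)])² ≤ (1 + Σ_{h=1}^H χ²(d_h^π ‖ d_h^μ)) · E_μ[(Σ_{h=1}^H f_h(s_h,a_h))²]. -/
/-!
Let `V` and `Δ = Q - V` be the value and advantage functions of `μ` for the rewards `f`. The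
performance difference lemma gives `E_π[∑ f] = E_ρ[V₁] + ∑ₕ ⟪d_h^π, Δₕ⟫`, and `⟪d_h^μ, Δₕ⟫ = 0`
because `Δₕ` is centred under `μ`; so `E_π[∑ f] = E_ρ[V₁] + ∑ₕ ⟪d_h^π - d_h^μ, Δₕ⟫`. Cauchy–Schwarz
with weights `d_h^μ` bounds its square by `(1 + ∑ₕ χ²(d_h^π ‖ d_h^μ)) (E_ρ[V₁]² + ∑ₕ E_{d_h^μ}[Δₕ²])`.
Finally, `∑ f = V₁(s₁) + ∑ₕ Mₕ` for martingale increments `Mₕ` whose conditional mean given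
`(sₕ, aₕ)` is `Δₕ`, so `E_μ[(∑ f)²] ≥ E_ρ[V₁]² + ∑ₕ E_{d_h^μ}[Δₕ²]`. All trajectory expectations
are computed by conditioning on the first step and inducting on the horizon.
-/

open Finset

namespace TBRM

/-- `p` is a probability mass function on a finite type. -/
def IsPMF {X : Type*} [Fintype X] (p : X → ℝ) : Prop :=
  (∀ x, 0 ≤ p x) ∧ ∑ x, p x = 1

/-- χ²-divergence between pmfs on a finite type. -/
noncomputable def chiSq {X : Type*} [Fintype X] (p q : X → ℝ) : ℝ :=
  (∑ x, p x ^ 2 / q x) - 1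

variable {H : ℕ} {S : Fin (H + 1) → Type*} {A : Type*}
variable [∀ i, Fintype (S i)] [∀ i, DecidableEq (S i)] [Fintype A] [DecidableEq A]

/-- Density of a full trajectory (including the extra final state `s_{H+1}`),
under initial distribution `ρ`, transition kernels `P`, and policy `π`. -/
noncomputable def trajDensity (ρ : S 0 → ℝ)
    (P : ∀ h : Fin H, S h.castSucc → A → S h.succ → ℝ)
    (π : ∀ h : Fin H, S h.castSucc → A → ℝ)
    (s : ∀ i : Fin (H + 1), S i) (a : Fin H → A) : ℝ :=
  ρ (s 0) * ∏ h : Fin H, (π h (s h.castSucc) (a h) * P h (s h.castSucc) (a h) (s h.succ))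

/-- Expectation of a trajectory functional under policy `π`. -/
noncomputable def expTraj (ρ : S 0 → ℝ)
    (P : ∀ h : Fin H, S h.castSucc → A → S h.succ → ℝ)
    (π : ∀ h : Fin H, S h.castSucc → A → ℝ)
    (f : (∀ i : Fin (H + 1), S i) → (Fin H → A) → ℝ) : ℝ :=
  ∑ s : ∀ i : Fin (H + 1), S i, ∑ a : Fin H → A, trajDensity ρ P π s a * f s a

/-- Step-`h` occupancy measure `d_h^π(x,b)`. -/
noncomputable def occ (ρ : S 0 → ℝ)
    (P : ∀ h : Fin H, S h.castSucc → A → S h.succ → ℝ)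
    (π : ∀ h : Fin H, S h.castSucc → A → ℝ)
    (h : Fin H) (x : S h.castSucc) (b : A) : ℝ :=
  expTraj ρ P π (fun s a => if s h.castSucc = x ∧ a h = b then 1 else 0)

lemma sum_pi_fin_succ {M : Type*} [AddCommMonoid M] {m : ℕ} {T : Fin (m + 1) → Type*}
    [∀ i, Fintype (T i)] (g : (∀ i, T i) → M) :
    ∑ s, g s = ∑ x : T 0, ∑ s : ∀ i : Fin m, T i.succ, g (Fin.cons x s) := by
  rw [← (Fin.consEquiv T).sum_comp, Fintype.sum_prod_type]
  rfl

lemma sq_sum_mul_le_sum_mul_sq {ι : Type*} [Fintype ι] (p z : ι → ℝ) (hp : IsPMF p) :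
    (∑ i, p i * z i) ^ 2 ≤ ∑ i, p i * z i ^ 2 := by
  simpa [hp.2] using sum_sq_le_sum_mul_sum_of_sq_le_mul univ (r := fun i => p i * z i)
    (fun i _ => hp.1 i) (fun i _ => mul_nonneg (hp.1 i) (sq_nonneg (z i)))
    (fun i _ => (by ring : (p i * z i) ^ 2 = p i * (p i * z i ^ 2)).le)

lemma sum_mul_add_sq_add {ι : Type*} [Fintype ι] {w z : ι → ℝ} (hw : ∑ i, w i = 1)
    (hwz : ∑ i, w i * z i = 0) (c : ℝ) (t : ι → ℝ) :
    ∑ i, w i * ((c + z i) ^ 2 + t i) = c ^ 2 + ∑ i, w i * (z i ^ 2 + t i) := by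
  have hexpand : ∀ i, w i * ((c + z i) ^ 2 + t i)
      = c ^ 2 * w i + 2 * c * (w i * z i) + w i * (z i ^ 2 + t i) := fun i => by ring
  simp only [hexpand, sum_add_distrib, ← mul_sum, hw, hwz, mul_one, mul_zero, add_zero]

lemma sq_add_sum_sum_sub_mul_le {ι : Type*} [Fintype ι] {κ : ι → Type*} [∀ i, Fintype (κ i)]
    (a : ℝ) (p q g : ∀ i, κ i → ℝ) (hq : ∀ i j, 0 < q i j) :
    (a + ∑ i, ∑ j, (p i j - q i j) * g i j) ^ 2
      ≤ (1 + ∑ i, ∑ j, (p i j - q i j) ^ 2 / q i j) * (a ^ 2 + ∑ i, ∑ j, q i j * g i j ^ 2) := by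
  have hcs := sum_sq_le_sum_mul_sum_of_sq_le_mul (univ : Finset (Option (Σ i, κ i)))
    (r := fun o => o.elim a fun y => (p y.1 y.2 - q y.1 y.2) * g y.1 y.2)
    (f := fun o => o.elim 1 fun y => (p y.1 y.2 - q y.1 y.2) ^ 2 / q y.1 y.2)
    (g := fun o => o.elim (a ^ 2) fun y => q y.1 y.2 * g y.1 y.2 ^ 2)
    (fun o _ => by cases o <;> simp [div_nonneg, sq_nonneg, (hq _ _).le])
    (fun o _ => by cases o <;> simp [mul_nonneg, sq_nonneg, (hq _ _).le])
    (fun o _ => by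
      cases o with
      | none => simp
      | some y =>
        dsimp only [Option.elim]
        field_simp [(hq y.1 y.2).ne']
        rfl)
  simpa [Fintype.sum_option, Fintype.sum_sigma] using hcs

lemma chiSq_eq_sum_sq_sub_div {Y : Type*} [Fintype Y] {p q : Y → ℝ} (hp : ∑ y, p y = 1)
    (hq : ∑ y, q y = 1) (hq0 : ∀ y, q y ≠ 0) : chiSq p q = ∑ y, (p y - q y) ^ 2 / q y := by
  have hexpand : ∀ y, (p y - q y) ^ 2 / q y = p y ^ 2 / q y - 2 * p y + q y := fun y => by
    field_simp [hq0 y]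
    ring
  rw [chiSq, sum_congr rfl fun y _ => hexpand y, sum_add_distrib, sum_sub_distrib, ← mul_sum, hp,
    hq]
  ring

section Value

variable {n : ℕ} {X : Fin (n + 1) → Type*} {B : Type*} [∀ i, Fintype (X i)] [Fintype B]
  (P : ∀ h : Fin n, X h.castSucc → B → X h.succ → ℝ) (ν μ u : ∀ h : Fin n, X h.castSucc → B → ℝ)

noncomputable def valueFn : ∀ k : Fin (n + 1), X k → ℝ :=
  Fin.reverseInduction (fun _ => 0)
    (fun h V x => ∑ b, ν h x b * (u h x b + ∑ x', P h x b x' * V x'))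

@[simp] lemma valueFn_last (x : X (Fin.last n)) : valueFn P ν u (Fin.last n) x = 0 := by
  simp [valueFn]

@[simp] lemma valueFn_castSucc (h : Fin n) (x : X h.castSucc) :
    valueFn P ν u h.castSucc x
      = ∑ b, ν h x b * (u h x b + ∑ x', P h x b x' * valueFn P ν u h.succ x') := by
  simp [valueFn]

noncomputable def advantage (h : Fin n) (x : X h.castSucc) (b : B) : ℝ :=
  u h x b + ∑ x', P h x b x' * valueFn P μ u h.succ x' - valueFn P μ u h.castSucc x

lemma sum_mul_advantage (hμ : ∀ h x, ∑ b, μ h x b = 1) (h : Fin n) (x : X h.castSucc) :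
    ∑ b, μ h x b * advantage P μ u h x b = 0 := by
  simp only [advantage, mul_sub, sum_sub_distrib, ← sum_mul, hμ, one_mul, valueFn_castSucc,
    sub_self]

/-- Performance difference lemma. -/
lemma valueFn_eq_add_valueFn_advantage (hν : ∀ h x, ∑ b, ν h x b = 1) (k : Fin (n + 1))
    (x : X k) : valueFn P ν u k x = valueFn P μ u k x + valueFn P ν (advantage P μ u) k x := by
  induction k using Fin.reverseInduction with
  | last => simp
  | cast h ih =>
    have hstep : ∀ b, u h x b + ∑ x', P h x b x' * valueFn P ν u h.succ x'
        = valueFn P μ u h.castSucc x + (advantage P μ u h x b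
          + ∑ x', P h x b x' * valueFn P ν (advantage P μ u) h.succ x') := fun b => by
      simp only [advantage, ih, mul_add, sum_add_distrib]
      ring
    rw [valueFn_castSucc P ν u, valueFn_castSucc P ν (advantage P μ u)]
    simp only [hstep, mul_add, sum_add_distrib, ← sum_mul, hν, one_mul]

lemma valueFn_advantage_self (hμ : ∀ h x, ∑ b, μ h x b = 1) (k : Fin (n + 1)) (x : X k) :
    valueFn P μ (advantage P μ u) k x = 0 := by
  induction k using Fin.reverseInduction with
  | last => simp
  | cast h ih => simp [ih, sum_mul_advantage P μ u hμ]

end Value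

section FirstStep

variable {n : ℕ} {X : Fin (n + 2) → Type*} {B : Type*}
  (ρ : X 0 → ℝ) (P : ∀ h : Fin (n + 1), X h.castSucc → B → X h.succ → ℝ)
  (ν u : ∀ h : Fin (n + 1), X h.castSucc → B → ℝ)

lemma sum_apply_cons (x : X 0) (b : B) (s : ∀ i : Fin (n + 1), X i.succ) (a : Fin n → B) :
    ∑ h, u h ((Fin.cons x s : ∀ i, X i) h.castSucc) ((Fin.cons b a : Fin (n + 1) → B) h)
      = u 0 x b + ∑ h : Fin n, u h.succ (s h.castSucc) (a h) :=
  Fin.sum_univ_succ _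

lemma trajDensity_cons (x : X 0) (b : B) (s : ∀ i : Fin (n + 1), X i.succ) (a : Fin n → B) :
    trajDensity ρ P ν (Fin.cons x s) (Fin.cons b a)
      = ρ x * ν 0 x b * trajDensity (S := fun i => X i.succ) (P 0 x b) (fun h => P h.succ)
          (fun h => ν h.succ) s a := by
  simp only [trajDensity, Fin.prod_univ_succ, mul_assoc]
  rfl

variable [∀ i, Fintype (X i)] [Fintype B]

lemma expTraj_cons (F : (∀ i, X i) → (Fin (n + 1) → B) → ℝ) :
    expTraj ρ P ν F = ∑ x, ρ x * ∑ b, ν 0 x b *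
      expTraj (S := fun i => X i.succ) (P 0 x b) (fun h => P h.succ) (fun h => ν h.succ)
        (fun s a => F (Fin.cons x s) (Fin.cons b a)) := by
  simp only [expTraj, sum_pi_fin_succ (T := X), sum_pi_fin_succ (T := fun _ : Fin (n + 1) => B),
    trajDensity_cons, mul_sum, mul_assoc]
  exact sum_congr rfl fun x _ => sum_comm

lemma valueFn_tail (k : Fin (n + 1)) (x : X k.succ) :
    valueFn (X := fun i => X i.succ) (fun h => P h.succ) (fun h => ν h.succ) (fun h => u h.succ)
      k x = valueFn P ν u k.succ x := by
  induction k using Fin.reverseInduction with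
  | last => simp
  | cast h ih =>
    show _ = valueFn P ν u h.succ.castSucc x
    rw [valueFn_castSucc, valueFn_castSucc]
    simp only [ih]

lemma advantage_tail (h : Fin n) (x : X h.castSucc.succ) (b : B) :
    advantage (X := fun i => X i.succ) (fun h => P h.succ) (fun h => ν h.succ) (fun h => u h.succ)
      h x b = advantage P ν u h.succ x b := by
  simp only [advantage, valueFn_tail]
  rfl

end FirstStep

section Expectation

variable {n : ℕ} {X : Fin (n + 1) → Type*} {B : Type*} [∀ i, Fintype (X i)] [Fintype B]
  (ρ : X 0 → ℝ) (P : ∀ h : Fin n, X h.castSucc → B → X h.succ → ℝ)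
  (ν u : ∀ h : Fin n, X h.castSucc → B → ℝ)

lemma expTraj_add (F G : (∀ i, X i) → (Fin n → B) → ℝ) :
    expTraj ρ P ν (fun s a => F s a + G s a) = expTraj ρ P ν F + expTraj ρ P ν G := by
  simp only [expTraj, mul_add, sum_add_distrib]

lemma expTraj_sum {ι : Type*} (t : Finset ι) (F : ι → (∀ i, X i) → (Fin n → B) → ℝ) :
    expTraj ρ P ν (fun s a => ∑ j ∈ t, F j s a) = ∑ j ∈ t, expTraj ρ P ν (F j) := by
  simp only [expTraj, mul_sum]
  exact (sum_congr rfl fun _ _ => sum_comm).trans sum_comm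

lemma expTraj_const_mul (c : ℝ) (F : (∀ i, X i) → (Fin n → B) → ℝ) :
    expTraj ρ P ν (fun s a => c * F s a) = c * expTraj ρ P ν F := by
  simp only [expTraj, mul_sum, mul_left_comm]

lemma expTraj_const (hP : ∀ h x b, ∑ x', P h x b x' = 1) (hν : ∀ h x, ∑ b, ν h x b = 1)
    (c : ℝ) : expTraj ρ P ν (fun _ _ => c) = c * ∑ x, ρ x := by
  induction n with
  | zero => simp [expTraj, trajDensity, sum_pi_fin_succ (T := X), mul_sum, mul_comm]
  | succ m ih =>
    have htail : ∀ (x : X 0) b, expTraj (S := fun i => X i.succ) (P 0 x b) (fun h => P h.succ)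
        (fun h => ν h.succ) (fun _ _ => c) = c := fun x b => by
      rw [ih (X := fun i => X i.succ) _ _ _ (fun h => hP h.succ) (fun h => hν h.succ), hP 0 x b,
        mul_one]
    have hν0 : ∀ x : X 0, ∑ b, ν 0 x b = 1 := hν 0
    simp only [expTraj_cons, htail, ← sum_mul, hν0, one_mul, mul_comm c]

lemma expTraj_sum_eq_valueFn (hP : ∀ h x b, ∑ x', P h x b x' = 1)
    (hν : ∀ h x, ∑ b, ν h x b = 1) :
    expTraj ρ P ν (fun s a => ∑ h, u h (s h.castSucc) (a h)) = ∑ x, ρ x * valueFn P ν u 0 x := by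
  induction n with
  | zero =>
    have hV : ∀ x, valueFn P ν u 0 x = 0 := valueFn_last P ν u
    simp [expTraj, hV]
  | succ m ih =>
    have htail : ∀ (x : X 0) b, expTraj (S := fun i => X i.succ) (P 0 x b) (fun h => P h.succ)
        (fun h => ν h.succ) (fun s a => u 0 x b + ∑ h : Fin m, u h.succ (s h.castSucc) (a h))
        = u 0 x b + ∑ x', P 0 x b x' * valueFn P ν u (Fin.succ 0) x' := fun x b => by
      rw [expTraj_add, expTraj_const _ _ _ (fun h => hP h.succ) (fun h => hν h.succ), hP 0 x b,
        mul_one, ih (X := fun i => X i.succ) _ _ _ _ (fun h => hP h.succ) (fun h => hν h.succ)]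
      simp only [valueFn_tail]
    have hV : ∀ x : X 0, valueFn P ν u 0 x
        = ∑ b, ν 0 x b * (u 0 x b + ∑ x', P 0 x b x' * valueFn P ν u (Fin.succ 0) x') :=
      valueFn_castSucc P ν u 0
    simp only [expTraj_cons, sum_apply_cons, htail, hV]

lemma expTraj_const_add_sq (hP : ∀ h x b, ∑ x', P h x b x' = 1) (hν : ∀ h x, ∑ b, ν h x b = 1)
    (hρ : ∑ x, ρ x = 1) (c : ℝ) (U : (∀ i, X i) → (Fin n → B) → ℝ) :
    expTraj ρ P ν (fun s a => (c + U s a) ^ 2)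
      = c ^ 2 + 2 * c * expTraj ρ P ν U + expTraj ρ P ν (fun s a => U s a ^ 2) := by
  have hexpand : (fun s a => (c + U s a) ^ 2)
      = fun s a => c ^ 2 + (2 * c * U s a + U s a ^ 2) := by
    funext s a
    ring
  rw [hexpand, expTraj_add, expTraj_add, expTraj_const ρ P ν hP hν, expTraj_const_mul, hρ,
    mul_one, add_assoc]

lemma sq_const_add_add_le_of_le (hρ : IsPMF ρ) (hP : ∀ h x b, ∑ x', P h x b x' = 1)
    (hν : ∀ h x, ∑ b, ν h x b = 1) (c T : ℝ)
    (hle : ∑ x, ρ x * valueFn P ν u 0 x ^ 2 + T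
      ≤ expTraj ρ P ν (fun s a => (∑ h, u h (s h.castSucc) (a h)) ^ 2)) :
    (c + ∑ x, ρ x * valueFn P ν u 0 x) ^ 2 + T
      ≤ expTraj ρ P ν (fun s a => (c + ∑ h, u h (s h.castSucc) (a h)) ^ 2) := by
  rw [expTraj_const_add_sq ρ P ν hP hν hρ.2, expTraj_sum_eq_valueFn ρ P ν u hP hν]
  nlinarith [sq_sum_mul_le_sum_mul_sq ρ (valueFn P ν u 0) hρ]

lemma sum_mul_valueFn_sq_add_le (hρ : ∀ x, 0 ≤ ρ x) (hP : ∀ h x b, IsPMF (P h x b))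
    (hν : ∀ h x, IsPMF (ν h x)) :
    ∑ x, ρ x * valueFn P ν u 0 x ^ 2
        + expTraj ρ P ν (fun s a => ∑ h, advantage P ν u h (s h.castSucc) (a h) ^ 2)
      ≤ expTraj ρ P ν (fun s a => (∑ h, u h (s h.castSucc) (a h)) ^ 2) := by
  induction n with
  | zero =>
    have hV : ∀ x, valueFn P ν u 0 x = 0 := valueFn_last P ν u
    simp [expTraj, hV]
  | succ m ih =>
    have hP1 : ∀ h x b, ∑ x', P h x b x' = 1 := fun h x b => (hP h x b).2
    have hν1 : ∀ h x, ∑ b, ν h x b = 1 := fun h x => (hν h x).2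
    have hstep : ∀ (x : X 0) (b : B),
        (valueFn P ν u 0 x + advantage P ν u 0 x b) ^ 2
          + expTraj (S := fun i => X i.succ) (P 0 x b) (fun h => P h.succ) (fun h => ν h.succ)
              (fun s a => ∑ h : Fin m, advantage P ν u h.succ (s h.castSucc) (a h) ^ 2)
        ≤ expTraj (S := fun i => X i.succ) (P 0 x b) (fun h => P h.succ) (fun h => ν h.succ)
            (fun s a => (u 0 x b + ∑ h : Fin m, u h.succ (s h.castSucc) (a h)) ^ 2) := by
      intro x b
      have htail := ih (X := fun i => X i.succ) (P 0 x b) (fun h => P h.succ) (fun h => ν h.succ)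
        (fun h => u h.succ) (hP 0 x b).1 (fun h => hP h.succ) (fun h => hν h.succ)
      have hshift := sq_const_add_add_le_of_le (X := fun i => X i.succ) _ _ _ _ (hP 0 x b)
        (fun h => hP1 h.succ) (fun h => hν1 h.succ) (u 0 x b) _ htail
      simp only [valueFn_tail, advantage_tail] at hshift
      have hsplit : valueFn P ν u 0 x + advantage P ν u 0 x b
          = u 0 x b + ∑ x', P 0 x b x' * valueFn P ν u (Fin.succ 0) x' := by
        simp only [advantage, Fin.castSucc_zero]
        ring
      rwa [hsplit]
    rw [expTraj_cons, expTraj_cons, ← sum_add_distrib]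
    refine sum_le_sum fun x _ => ?_
    rw [← mul_add]
    refine mul_le_mul_of_nonneg_left ?_ (hρ x)
    simp only [sum_apply_cons, sum_apply_cons (fun h y b => advantage P ν u h y b ^ 2)]
    refine le_of_eq_of_le ?_
      (sum_le_sum fun b _ => mul_le_mul_of_nonneg_left (hstep x b) ((hν 0 x).1 b))
    simp only [expTraj_add, expTraj_const (X := fun i => X i.succ) _ _ _ (fun h => hP1 h.succ)
      (fun h => hν1 h.succ), hP1 0 x, mul_one]
    exact (sum_mul_add_sq_add (hν1 0 x) (sum_mul_advantage P ν u hν1 0 x) _ _).symm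

end Expectation

section Occupancy

variable {n : ℕ} {X : Fin (n + 1) → Type*} {B : Type*} [∀ i, Fintype (X i)] [Fintype B]
  [∀ i, DecidableEq (X i)] [DecidableEq B]
  (ρ : X 0 → ℝ) (P : ∀ h : Fin n, X h.castSucc → B → X h.succ → ℝ)
  (ν μ u : ∀ h : Fin n, X h.castSucc → B → ℝ)

lemma sum_occ_mul (h : Fin n) (ψ : X h.castSucc → B → ℝ) :
    ∑ y : X h.castSucc × B, occ ρ P ν h y.1 y.2 * ψ y.1 y.2
      = expTraj ρ P ν (fun s a => ψ (s h.castSucc) (a h)) := by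
  simp only [occ, expTraj, sum_mul, mul_assoc]
  rw [sum_comm]
  refine sum_congr rfl fun s _ => ?_
  rw [sum_comm]
  refine sum_congr rfl fun a _ => ?_
  rw [← mul_sum]
  congr 1
  simp [Fintype.sum_prod_type, ite_and]

lemma sum_occ (hP : ∀ h x b, ∑ x', P h x b x' = 1) (hν : ∀ h x, ∑ b, ν h x b = 1) (h : Fin n) :
    ∑ y : X h.castSucc × B, occ ρ P ν h y.1 y.2 = ∑ x, ρ x := by
  simpa [expTraj_const ρ P ν hP hν] using sum_occ_mul ρ P ν h (fun _ _ => 1)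

lemma sum_sum_occ_mul (hP : ∀ h x b, ∑ x', P h x b x' = 1) (hν : ∀ h x, ∑ b, ν h x b = 1) :
    ∑ h, ∑ y : X h.castSucc × B, occ ρ P ν h y.1 y.2 * u h y.1 y.2
      = ∑ x, ρ x * valueFn P ν u 0 x := by
  simp only [sum_occ_mul, ← expTraj_sum, expTraj_sum_eq_valueFn ρ P ν u hP hν]

lemma expTraj_sum_eq_add_sum_occ_sub_mul (hP : ∀ h x b, ∑ x', P h x b x' = 1)
    (hν : ∀ h x, ∑ b, ν h x b = 1) (hμ : ∀ h x, ∑ b, μ h x b = 1) :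
    expTraj ρ P ν (fun s a => ∑ h, u h (s h.castSucc) (a h))
      = ∑ x, ρ x * valueFn P μ u 0 x + ∑ h, ∑ y : X h.castSucc × B,
          (occ ρ P ν h y.1 y.2 - occ ρ P μ h y.1 y.2) * advantage P μ u h y.1 y.2 := by
  simp only [sub_mul, sum_sub_distrib, sum_sum_occ_mul ρ P _ _ hP hν, sum_sum_occ_mul ρ P _ _ hP hμ,
    valueFn_advantage_self P μ u hμ, mul_zero, sum_const_zero, sub_zero, ← sum_add_distrib,
    ← mul_add, ← valueFn_eq_add_valueFn_advantage P ν μ u hν, expTraj_sum_eq_valueFn ρ P ν u hP hν]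

lemma sq_sum_mul_valueFn_add_sum_occ_mul_sq_le (hρ : IsPMF ρ) (hP : ∀ h x b, IsPMF (P h x b))
    (hμ : ∀ h x, IsPMF (μ h x)) :
    (∑ x, ρ x * valueFn P μ u 0 x) ^ 2
        + ∑ h, ∑ y : X h.castSucc × B, occ ρ P μ h y.1 y.2 * advantage P μ u h y.1 y.2 ^ 2
      ≤ expTraj ρ P μ (fun s a => (∑ h, u h (s h.castSucc) (a h)) ^ 2) := by
  have hP1 : ∀ h x b, ∑ x', P h x b x' = 1 := fun h x b => (hP h x b).2
  have hμ1 : ∀ h x, ∑ b, μ h x b = 1 := fun h x => (hμ h x).2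
  rw [sum_sum_occ_mul ρ P μ (fun h x b => advantage P μ u h x b ^ 2) hP1 hμ1,
    ← expTraj_sum_eq_valueFn ρ P μ (fun h x b => advantage P μ u h x b ^ 2) hP1 hμ1]
  exact (add_le_add_left (sq_sum_mul_le_sum_mul_sq _ _ hρ) _).trans
    (sum_mul_valueFn_sq_add_le ρ P μ u hρ.1 hP hμ)

end Occupancy

theorem change_of_trajectory_measure_general
    (ρ : S 0 → ℝ) (hρ : IsPMF ρ)
    (P : ∀ h : Fin H, S h.castSucc → A → S h.succ → ℝ)
    (hP : ∀ h s a, IsPMF (P h s a))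
    (π μ : ∀ h : Fin H, S h.castSucc → A → ℝ)
    (hπ : ∀ h s, IsPMF (π h s)) (hμ : ∀ h s, IsPMF (μ h s))
    (hsupp : ∀ (h : Fin H) (s : S h.castSucc) (a : A), 0 < occ ρ P μ h s a)
    (f : ∀ h : Fin H, S h.castSucc → A → ℝ) :
    (expTraj ρ P π (fun s a => ∑ h : Fin H, f h (s h.castSucc) (a h))) ^ 2 ≤
      (1 + ∑ h : Fin H,
          chiSq (fun x : S h.castSucc × A => occ ρ P π h x.1 x.2)
                (fun x : S h.castSucc × A => occ ρ P μ h x.1 x.2)) *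
        expTraj ρ P μ (fun s a => (∑ h : Fin H, f h (s h.castSucc) (a h)) ^ 2) := by
  have hP1 : ∀ h s a, ∑ s', P h s a s' = 1 := fun h s a => (hP h s a).2
  have hπ1 : ∀ h s, ∑ a, π h s a = 1 := fun h s => (hπ h s).2
  have hμ1 : ∀ h s, ∑ a, μ h s a = 1 := fun h s => (hμ h s).2
  have hχ : ∀ h, chiSq (fun x : S h.castSucc × A => occ ρ P π h x.1 x.2)
      (fun x : S h.castSucc × A => occ ρ P μ h x.1 x.2)
      = ∑ y : S h.castSucc × A,
          (occ ρ P π h y.1 y.2 - occ ρ P μ h y.1 y.2) ^ 2 / occ ρ P μ h y.1 y.2 :=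
    fun h => chiSq_eq_sum_sq_sub_div (by rw [sum_occ ρ P π hP1 hπ1, hρ.2])
      (by rw [sum_occ ρ P μ hP1 hμ1, hρ.2]) fun y => (hsupp h y.1 y.2).ne'
  rw [expTraj_sum_eq_add_sum_occ_sub_mul ρ P π μ f hP1 hπ1 hμ1]
  simp only [hχ]
  have hcs := sq_add_sum_sum_sub_mul_le (∑ x, ρ x * valueFn P μ f 0 x)
    (fun h (y : S h.castSucc × A) => occ ρ P π h y.1 y.2)
    (fun h (y : S h.castSucc × A) => occ ρ P μ h y.1 y.2) (fun h y => advantage P μ f h y.1 y.2)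
    fun h y => hsupp h y.1 y.2
  exact hcs.trans (mul_le_mul_of_nonneg_left
    (sq_sum_mul_valueFn_add_sum_occ_mul_sq_le ρ P μ f hρ hP hμ)
    (add_nonneg zero_le_one (sum_nonneg fun h _ => sum_nonneg fun y _ =>
      div_nonneg (sq_nonneg _) (hsupp h y.1 y.2).le)))

/-- **Change-of-Trajectory-Measure Lemma.** For every policy `π`, every policy `μ` whose
step-wise occupancy measures have full support, and every family of functions
`f h : S h × A → ℝ`, the square of the expected trajectory sum under `π` is bounded by
`(1 + Σ_h χ²(d_h^π ‖ d_h^μ))` times the second moment of the trajectory sum under `μ`. -/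
theorem change_of_trajectory_measure
    (hH : 0 < H) [∀ i, Nonempty (S i)] [Nonempty A]
    (ρ : S 0 → ℝ) (hρ : IsPMF ρ)
    (P : ∀ h : Fin H, S h.castSucc → A → S h.succ → ℝ)
    (hP : ∀ h s a, IsPMF (P h s a))
    (π μ : ∀ h : Fin H, S h.castSucc → A → ℝ)
    (hπ : ∀ h s, IsPMF (π h s)) (hμ : ∀ h s, IsPMF (μ h s))
    (hsupp : ∀ (h : Fin H) (s : S h.castSucc) (a : A), 0 < occ ρ P μ h s a)
    (f : ∀ h : Fin H, S h.castSucc → A → ℝ) :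
    (expTraj ρ P π (fun s a => ∑ h : Fin H, f h (s h.castSucc) (a h))) ^ 2 ≤
      (1 + ∑ h : Fin H,
          chiSq (fun x : S h.castSucc × A => occ ρ P π h x.1 x.2)
                (fun x : S h.castSucc × A => occ ρ P μ h x.1 x.2)) *
        expTraj ρ P μ (fun s a => (∑ h : Fin H, f h (s h.castSucc) (a h)) ^ 2) :=
  change_of_trajectory_measure_general ρ hρ P hP π μ hπ hμ hsupp f

end TBRM
end

section
/- Hard instance for the iterative Bellman residual update in a two-armed bandit: Let β := 1/10 and for q = (q₁, q₂) ∈ ℝ² define V(q) := β · log( exp(q₁/β) + exp(q₂/β) ). Let Q† := (0, 0) and Q* := (10, 0), and define ℓ(q) := (1 − q₁ + V(q) − V(Q†))² + (− q₂ + V(q) − V(Q†))². Then ℓ(Q†) < ℓ(Q*). -/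
namespace TBRM

/-- **Hard instance for the iterative Bellman residual update in a two-armed bandit.**
With `β = 1/10`, soft value `V(q) = β·log(exp(q₁/β) + exp(q₂/β))`, previous iterate
`Q† = (0,0)`, candidate `Q* = (10,0)`, and one-iteration Bellman residual loss
`ℓ(q) = (1 − q₁ + V(q) − V(Q†))² + (−q₂ + V(q) − V(Q†))²`, one has `ℓ(Q†) < ℓ(Q*)`. -/
theorem iterative_bellman_hard_instance :
    let β : ℝ := 1 / 10
    let V : ℝ × ℝ → ℝ := fun q => β * Real.log (Real.exp (q.1 / β) + Real.exp (q.2 / β))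
    let Qdag : ℝ × ℝ := (0, 0)
    let Qstar : ℝ × ℝ := (10, 0)
    let ℓ : ℝ × ℝ → ℝ := fun q =>
      (1 - q.1 + V q - V Qdag) ^ 2 + (-q.2 + V q - V Qdag) ^ 2
    ℓ Qdag < ℓ Qstar := by
  intro β V Qdag Qstar ℓ
  have h0 : (0:ℝ) / β = 0 := by norm_num [β]
  have h10 : (10:ℝ) / β = 100 := by norm_num [β]
  simp only [ℓ, V, Qdag, Qstar, β] at *
  norm_num
  set L : ℝ := Real.log (Real.exp 100 + Real.exp 0) with hL
  set L2 : ℝ := Real.log (Real.exp 0 + Real.exp 0) with hL2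
  have hL2' : L2 = Real.log 2 := by
    rw [hL2, Real.exp_zero]; norm_num
  have hlog2 : Real.log 2 ≤ 1 := by
    have := Real.log_le_sub_one_of_pos (by norm_num : (0:ℝ) < 2)
    linarith
  have hLge : (100:ℝ) ≤ L := by
    rw [hL]
    calc (100:ℝ) = Real.log (Real.exp 100) := (Real.log_exp 100).symm
    _ ≤ _ := Real.log_le_log (Real.exp_pos _) (le_add_of_nonneg_right (Real.exp_pos 0).le)
  nlinarith [hL2' ▸ hlog2, sq_nonneg (1 - 10 + 10⁻¹ * L - 10⁻¹ * L2)]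
end TBRM
end
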